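/- arXiv:1811.02865 — 2 statements merged into one kernel-verified Lean document; each statement's English description precedes it below -/
import Mathlib

section
/- For γ > 0 and λ₁, λ₂ the positive constants from the characteristic roots of γλ⁴ - λ² - 1, the function f(δ) = λ₂ tan(λ₂ δ) + λ₁ tanh(λ₁ δ) has a unique zero δ^γ in the interval (π/(2λ₂), π/λ₂). -/
/-!
Substituting `x = λ₂ δ`, the interval becomes `(π/2, π)`, on which `tan` increases from `-∞` to
`tan π = 0`, while `λ₁ tanh (λ₁ δ)` is increasing, bounded and positive. So
`f δ = λ₂ tan (λ₂ δ) + λ₁ tanh (λ₁ δ)` is strictly increasing and continuous on `(π/(2λ₂), π/λ₂]`,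
tends to `-∞` at the left end and is positive at the right end; the intermediate value theorem
gives a zero and strict monotonicity makes it unique.
-/

open Real Set Filter Topology

theorem existsUnique_eq_of_strictMonoOn_of_tendsto_atBot
    {α β : Type*} [ConditionallyCompleteLinearOrder α] [TopologicalSpace α] [OrderTopology α]
    [DenselyOrdered α] [LinearOrder β] [TopologicalSpace β] [OrderClosedTopology β] [NoBotOrder β]
    {f : α → β} {a b : α} {y : β} (hab : a < b) (hmono : StrictMonoOn f (Ioc a b))
    (hcont : ContinuousOn f (Ioc a b)) (hlim : Tendsto f (𝓝[>] a) atBot) (hy : y < f b) :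
    ∃! x, x ∈ Ioo a b ∧ f x = y := by
  have : (𝓝[>] a).NeBot := nhdsGT_neBot_of_exists_gt ⟨b, hab⟩
  obtain ⟨c, hfc, hc⟩ : ∃ c, f c < y ∧ c ∈ Ioo a b :=
    ((hlim.eventually_lt_atBot y).and (Ioo_mem_nhdsGT hab)).exists
  obtain ⟨x, hx, hfx⟩ := intermediate_value_Ioo hc.2.le
    (hcont.mono fun t ht => ⟨hc.1.trans_le ht.1, ht.2⟩) ⟨hfc, hy⟩
  have hxab : x ∈ Ioo a b := ⟨hc.1.trans hx.1, hx.2⟩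
  refine ⟨x, ⟨hxab, hfx⟩, fun x' ⟨hx', hfx'⟩ => ?_⟩
  exact hmono.injOn (Ioo_subset_Ioc_self hx') (Ioo_subset_Ioc_self hxab) (hfx'.trans hfx.symm)

namespace Real

theorem tanh_strictMono : StrictMono tanh := by
  intro x y hxy
  by_contra! h
  have := artanh_le_artanh (neg_one_lt_tanh y) (tanh_lt_one x) h
  rw [artanh_tanh, artanh_tanh] at this
  exact this.not_gt hxy

theorem continuous_tanh : Continuous tanh := by
  rw [show tanh = fun x => sinh x / cosh x from funext tanh_eq_sinh_div_cosh]
  exact continuous_sinh.div continuous_cosh fun x => (cosh_pos x).ne'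

theorem strictMonoOn_tan_Ioo_pi_div_two : StrictMonoOn tan (Ioo (π / 2) (π + π / 2)) := by
  intro x hx y hy hxy
  rw [← tan_sub_pi x, ← tan_sub_pi y]
  exact strictMonoOn_tan ⟨by linarith [hx.1], by linarith [hx.2]⟩
    ⟨by linarith [hy.1], by linarith [hy.2]⟩ (by linarith)

theorem continuousOn_tan_Ioo_pi_div_two : ContinuousOn tan (Ioo (π / 2) (π + π / 2)) :=
  continuousOn_tan.mono fun _ hx => (cos_neg_of_pi_div_two_lt_of_lt hx.1 hx.2).ne

theorem tendsto_tan_nhdsGT_pi_div_two : Tendsto tan (𝓝[>] (π / 2)) atBot := by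
  have hshift : Tendsto (· - π) (𝓝[>] (π / 2)) (𝓝[>] (-(π / 2))) := by
    have h : Tendsto (· - π) (𝓝[>] (π / 2)) (𝓝[>] (π / 2 - π)) :=
      (continuous_sub_right π).continuousWithinAt.tendsto_nhdsWithin
        fun x (hx : π / 2 < x) => sub_lt_sub_right hx π
    rwa [show π / 2 - π = -(π / 2) by ring] at h
  exact (tendsto_tan_neg_pi_div_two.comp hshift).congr tan_sub_pi

theorem existsUnique_mul_tan_add_mul_tanh_eq_zero {a b : ℝ} (ha : 0 < a) (hb : 0 < b) :
    ∃! δ, δ ∈ Ioo (π / (2 * a)) (π / a) ∧ a * tan (a * δ) + b * tanh (b * δ) = 0 := by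
  have hleft : a * (π / (2 * a)) = π / 2 := by field_simp
  have hright : a * (π / a) = π := by field_simp
  have hmaps : MapsTo (a * ·) (Ioc (π / (2 * a)) (π / a)) (Ioo (π / 2) (π + π / 2)) :=
    fun δ hδ => ⟨hleft ▸ mul_lt_mul_of_pos_left hδ.1 ha,
      by nlinarith [mul_le_mul_of_nonneg_left hδ.2 ha.le, pi_pos]⟩
  have htanh_mono : StrictMono fun δ => b * tanh (b * δ) :=
    (tanh_strictMono.comp (strictMono_mul_left_of_pos hb)).const_mul hb
  refine existsUnique_eq_of_strictMonoOn_of_tendsto_atBot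
    (div_lt_div_of_pos_left pi_pos ha (by linarith)) ?_ ?_ ?_ ?_
  · exact (((strictMono_mul_left_of_pos ha).comp_strictMonoOn strictMonoOn_tan_Ioo_pi_div_two).comp
      ((strictMono_mul_left_of_pos ha).strictMonoOn _) hmaps).add (htanh_mono.strictMonoOn _)
  · exact (continuousOn_const.mul (continuousOn_tan_Ioo_pi_div_two.comp
      (continuous_const_mul a).continuousOn hmaps)).add (continuous_const.mul (continuous_tanh.comp
      (continuous_const_mul b))).continuousOn
  · have hscale : Tendsto (a * ·) (𝓝[>] (π / (2 * a))) (𝓝[>] (π / 2)) := by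
      rw [← hleft]
      exact (continuous_const_mul a).continuousWithinAt.tendsto_nhdsWithin
        fun δ hδ => mul_lt_mul_of_pos_left hδ ha
    refine tendsto_atBot_add_right_of_ge _ b
      ((tendsto_tan_nhdsGT_pi_div_two.comp hscale).const_mul_atBot ha) fun δ => ?_
    nlinarith [tanh_lt_one (b * δ)]
  · have : 0 < b * tanh (b * (π / a)) := by
      simpa using htanh_mono (show 0 < π / a by positivity)
    simpa [hright] using this

end Real

theorem stmt4 (γ : ℝ) (hγ : 0 < γ)
    (l1 l2 : ℝ)
    (hl1 : l1 = Real.sqrt ((1 + Real.sqrt (1 + 4 * γ)) / (2 * γ)))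
    (hl2 : l2 = Real.sqrt ((Real.sqrt (1 + 4 * γ) - 1) / (2 * γ))) :
    ∃! δ : ℝ, δ ∈ Set.Ioo (Real.pi / (2 * l2)) (Real.pi / l2) ∧
      l2 * Real.tan (l2 * δ) + l1 * Real.tanh (l1 * δ) = 0 := by
  have hroot : 1 < √(1 + 4 * γ) := (lt_sqrt zero_le_one).2 (by linarith)
  have hl1pos : 0 < l1 := hl1 ▸ sqrt_pos.2 (by positivity)
  have hl2pos : 0 < l2 := hl2 ▸ sqrt_pos.2 (div_pos (by linarith) (by positivity))
  exact existsUnique_mul_tan_add_mul_tanh_eq_zero hl2pos hl1pos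
end

section
/- Let γ > 0 and consider the one-dimensional transition energy j^γ(z) = ∫_ℝ (γ/2)(z'')² + (1/2)(z')² + (1/2)(1 - z²) dx over the class V of odd C² functions z : ℝ → [-1,1] that are nondecreasing and equal ±1 outside a compact interval. Then the infimum P^γ = inf_{z ∈ V} j^γ(z) is finite and strictly positive. -/
/-!
The class is nonempty: `x ↦ smoothTransition x - smoothTransition (-x)` belongs to it.
For the lower bound (the Modica–Mortola trick), drop the `z''` term and use
`(z')² / 2 + (1 - z²) / 2 ≥ (z')² / 2 + (1 - z²)² / 2 ≥ z' (1 - z²)`, valid since `0 ≤ 1 - z² ≤ 1`.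
The right-hand side is the derivative of `z - z³ / 3`, which increases by `4 / 3` as `z` goes
from `-1` to `1`; hence `j^γ ≥ 4 / 3` on the whole class.
-/

open Real Set MeasureTheory Filter Function Topology

noncomputable def transitionDensity (γ : ℝ) (z : ℝ → ℝ) (x : ℝ) : ℝ :=
  (γ / 2) * (iteratedDeriv 2 z x) ^ 2 + (1 / 2) * (deriv z x) ^ 2 + (1 / 2) * (1 - (z x) ^ 2)

lemma continuous_transitionDensity (γ : ℝ) {z : ℝ → ℝ} (hz : ContDiff ℝ 2 z) :
    Continuous (transitionDensity γ z) := by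
  have h0 : Continuous z := hz.continuous
  have h1 : Continuous (deriv z) := hz.continuous_deriv (by norm_num)
  have h2 : Continuous (iteratedDeriv 2 z) := hz.continuous_iteratedDeriv 2 le_rfl
  unfold transitionDensity
  fun_prop

lemma transitionDensity_eq_zero_of_eventuallyEq {γ c x : ℝ} {z : ℝ → ℝ} (hc : c ^ 2 = 1)
    (hz : z =ᶠ[𝓝 x] fun _ => c) : transitionDensity γ z x = 0 := by
  have hz' : deriv z =ᶠ[𝓝 x] fun _ => 0 := by
    filter_upwards [hz.eventuallyEq_nhds] with y hy
    rw [hy.deriv_eq, deriv_const]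
  have hz'' : iteratedDeriv 2 z x = 0 := by
    rw [iteratedDeriv_succ, iteratedDeriv_one, hz'.deriv_eq, deriv_const]
  simp [transitionDensity, hz'', hz'.eq_of_nhds, hz.eq_of_nhds, hc]

lemma deriv_mul_one_sub_sq_le_transitionDensity {γ x : ℝ} {z : ℝ → ℝ} (hγ : 0 ≤ γ)
    (hzx : z x ∈ Icc (-1 : ℝ) 1) :
    deriv z x * (1 - z x ^ 2) ≤ transitionDensity γ z x := by
  have hsq : z x ^ 2 ≤ 1 := by nlinarith [hzx.1, hzx.2]
  unfold transitionDensity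
  nlinarith [sq_nonneg (deriv z x - (1 - z x ^ 2)), mul_nonneg hγ (sq_nonneg (iteratedDeriv 2 z x)),
    mul_nonneg (sub_nonneg.2 hsq) (sq_nonneg (z x))]

lemma continuous_deriv_mul_one_sub_sq {z : ℝ → ℝ} (hz : ContDiff ℝ 1 z) :
    Continuous fun x => deriv z x * (1 - z x ^ 2) := by
  have := hz.continuous_deriv le_rfl
  have := hz.continuous
  fun_prop

lemma integral_deriv_mul_one_sub_sq {z : ℝ → ℝ} (hz : ContDiff ℝ 1 z) (a b : ℝ) :
    ∫ x in a..b, deriv z x * (1 - z x ^ 2) = (z b - z b ^ 3 / 3) - (z a - z a ^ 3 / 3) := by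
  have hderiv (x : ℝ) : HasDerivAt (fun y => z y - z y ^ 3 / 3) (deriv z x * (1 - z x ^ 2)) x := by
    have hzx : HasDerivAt z (deriv z x) x := (hz.differentiable one_ne_zero x).hasDerivAt
    refine (hzx.sub ((hzx.pow 3).div_const 3)).congr_deriv ?_
    push_cast
    ring
  exact intervalIntegral.integral_eq_sub_of_hasDerivAt (fun x _ => hderiv x)
    ((continuous_deriv_mul_one_sub_sq hz).intervalIntegrable a b)

lemma four_thirds_le_integral_transitionDensity {γ δ : ℝ} (hγ : 0 ≤ γ) {z : ℝ → ℝ}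
    (hz : ContDiff ℝ 2 z) (hrange : ∀ x, z x ∈ Icc (-1 : ℝ) 1)
    (hright : ∀ x > δ, z x = 1) (hleft : ∀ x < -δ, z x = -1) :
    4 / 3 ≤ ∫ x, transitionDensity γ z x := by
  have hz₁ : ContDiff ℝ 1 z := hz.of_le (by norm_num)
  set b := |δ| + 1
  have hδb : δ < b := by linarith [le_abs_self δ]
  have hsupp : support (transitionDensity γ z) ⊆ Ioc (-b) b := by
    intro x hx
    by_contra hxb
    rcases le_or_gt x (-b) with hx' | hx'
    · refine hx (transitionDensity_eq_zero_of_eventuallyEq (c := -1) (by norm_num) ?_)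
      filter_upwards [Iio_mem_nhds (show x < -δ by linarith)] with y hy using hleft y hy
    · have : b < x := by by_contra! h; exact hxb ⟨hx', h⟩
      refine hx (transitionDensity_eq_zero_of_eventuallyEq (c := 1) (by norm_num) ?_)
      filter_upwards [Ioi_mem_nhds (show δ < x by linarith)] with y hy using hright y hy
  rw [← intervalIntegral.integral_eq_integral_of_support_subset hsupp]
  calc (4 / 3 : ℝ)
      = ∫ x in (-b)..b, deriv z x * (1 - z x ^ 2) := by
        rw [integral_deriv_mul_one_sub_sq hz₁, hright b hδb, hleft (-b) (by linarith)]
        norm_num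
    _ ≤ ∫ x in (-b)..b, transitionDensity γ z x :=
        intervalIntegral.integral_mono_on (by linarith [abs_nonneg δ])
          ((continuous_deriv_mul_one_sub_sq hz₁).intervalIntegrable _ _)
          ((continuous_transitionDensity γ hz).intervalIntegrable _ _)
          fun x _ => deriv_mul_one_sub_sq_le_transitionDensity hγ (hrange x)

noncomputable def oddTransition (x : ℝ) : ℝ := smoothTransition x - smoothTransition (-x)

lemma contDiff_oddTransition {n : ℕ∞} : ContDiff ℝ n oddTransition :=
  smoothTransition.contDiff.sub (smoothTransition.contDiff.comp contDiff_neg)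

lemma oddTransition_mem_Icc (x : ℝ) : oddTransition x ∈ Icc (-1 : ℝ) 1 := by
  unfold oddTransition
  constructor <;> linarith [smoothTransition.nonneg x, smoothTransition.le_one x,
    smoothTransition.nonneg (-x), smoothTransition.le_one (-x)]

lemma oddTransition_neg (x : ℝ) : oddTransition (-x) = -oddTransition x := by
  simp only [oddTransition, neg_neg, neg_sub]

lemma monotone_oddTransition : Monotone oddTransition := fun _ _ hxy =>
  sub_le_sub (smoothTransition.monotone hxy) (smoothTransition.monotone (neg_le_neg hxy))

lemma oddTransition_of_one_le {x : ℝ} (hx : 1 ≤ x) : oddTransition x = 1 := by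
  simp [oddTransition, smoothTransition.one_of_one_le hx,
    smoothTransition.zero_of_nonpos (show -x ≤ 0 by linarith)]

lemma oddTransition_of_le_neg_one {x : ℝ} (hx : x ≤ -1) : oddTransition x = -1 := by
  rw [← neg_neg x, oddTransition_neg, oddTransition_of_one_le (by linarith)]

theorem stmt17 (γ : ℝ) (hγ : 0 < γ)
    (V : Set (ℝ → ℝ))
    (hV : V = {z : ℝ → ℝ | ContDiff ℝ 2 z ∧ (∀ x, z x ∈ Set.Icc (-1 : ℝ) 1) ∧
      (∀ x, z (-x) = -z x) ∧ (∀ x, 0 ≤ deriv z x) ∧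
      ∃ δ > (0 : ℝ), (∀ x > δ, z x = 1) ∧ (∀ x < -δ, z x = -1)})
    (j : (ℝ → ℝ) → ℝ)
    (hj : ∀ z, j z = ∫ x : ℝ, ((γ / 2) * (iteratedDeriv 2 z x) ^ 2
      + (1 / 2) * (deriv z x) ^ 2 + (1 / 2) * (1 - (z x) ^ 2))) :
    (j '' V).Nonempty ∧ BddBelow (j '' V) ∧ 0 < sInf (j '' V) := by
  have hmem : oddTransition ∈ V := by
    rw [hV]
    exact ⟨contDiff_oddTransition, oddTransition_mem_Icc, oddTransition_neg,
      fun _ => monotone_oddTransition.deriv_nonneg, 1, one_pos,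
      fun _ hx => oddTransition_of_one_le hx.le, fun _ hx => oddTransition_of_le_neg_one hx.le⟩
  have hne : (j '' V).Nonempty := ⟨_, mem_image_of_mem j hmem⟩
  have hbound : ∀ y ∈ j '' V, 4 / 3 ≤ y := by
    rintro _ ⟨z, hz, rfl⟩
    rw [hV] at hz
    obtain ⟨hz, hrange, -, -, δ, -, hright, hleft⟩ := hz
    rw [hj]
    exact four_thirds_le_integral_transitionDensity hγ.le hz hrange hright hleft
  exact ⟨hne, ⟨4 / 3, hbound⟩, lt_of_lt_of_le (by norm_num) (le_csInf hne hbound)⟩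
end
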